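/- Let k : (0,∞) → ℝ be a differentiable positive function satisfying |k'(t)| ≤ c·k(t)/t for all t > 0 and k(s)/k(θ) ≤ C·(s/θ)^α for all 0 < θ ≤ s. Then for all θ > 0 and λ ≥ 0, |k(θ+λ) - k(θ)| ≤ c·C·k(θ)·((θ+λ)^α/θ^α − 1)/α. -/

import Mathlib

/-!
On `[θ, θ + λ]` the two hypotheses give `|k' t| ≤ c C k(θ) t^(α-1) / θ^α`, and the right-hand side
is the derivative of `c C k(θ) t^α / (α θ^α)`; a fencing argument (no integration needed) bounds
`|k(θ + λ) - k(θ)|` by the increment of this antiderivative.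
-/

open Set

theorem abs_sub_le_sub_of_abs_deriv_le {f f' B B' : ℝ → ℝ} {a b : ℝ} (hab : a ≤ b)
    (hf : ∀ x ∈ Icc a b, HasDerivAt f (f' x) x) (hB : ∀ x ∈ Icc a b, HasDerivAt B (B' x) x)
    (bound : ∀ x ∈ Ico a b, |f' x| ≤ B' x) :
    |f b - f a| ≤ B b - B a := by
  have hcont : ∀ {g g' : ℝ → ℝ}, (∀ x ∈ Icc a b, HasDerivAt g (g' x) x) →
      ContinuousOn (fun x => g x - g a) (Icc a b) := fun hg x hx =>
    ((hg x hx).continuousAt.sub continuousAt_const).continuousWithinAt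
  have hderivWithin : ∀ {g g' : ℝ → ℝ}, (∀ x ∈ Icc a b, HasDerivAt g (g' x) x) →
      ∀ x ∈ Ico a b, HasDerivWithinAt (fun x => g x - g a) (g' x) (Ici x) x := fun hg x hx =>
    ((hg x (Ico_subset_Icc_self hx)).sub_const _).hasDerivWithinAt
  exact image_norm_le_of_norm_deriv_right_le_deriv_boundary' (hcont hf) (hderivWithin hf)
    (by simp) (hcont hB) (hderivWithin hB) bound (right_mem_Icc.2 hab)

theorem abs_deriv_le_of_ratio_le {c C α θ : ℝ} (hc : 0 ≤ c) {k k' : ℝ → ℝ} (hθ : 0 < θ)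
    (hkθ : 0 < k θ) (hbound : ∀ t : ℝ, 0 < t → |k' t| ≤ c * k t / t)
    (hratio : ∀ s : ℝ, θ ≤ s → k s / k θ ≤ C * (s / θ) ^ α) {t : ℝ} (ht : θ ≤ t) :
    |k' t| ≤ c * C * k θ / θ ^ α * t ^ (α - 1) := by
  have ht0 : 0 < t := hθ.trans_le ht
  calc |k' t| ≤ c * k t / t := hbound t ht0
    _ ≤ c * (C * (t / θ) ^ α * k θ) / t := by
      gcongr
      exact (div_le_iff₀ hkθ).1 (hratio t ht)
    _ = c * C * k θ / θ ^ α * t ^ (α - 1) := by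
      rw [Real.div_rpow ht0.le hθ.le, Real.rpow_sub_one ht0.ne']
      ring

theorem stmt4_general (c C α : ℝ) (hc : 0 < c) (hα : 0 < α)
    (k k' : ℝ → ℝ) (hkpos : ∀ t : ℝ, 0 < t → 0 < k t)
    (hderiv : ∀ t : ℝ, 0 < t → HasDerivAt k (k' t) t)
    (hbound : ∀ t : ℝ, 0 < t → |k' t| ≤ c * k t / t)
    (hratio : ∀ θ s : ℝ, 0 < θ → θ ≤ s → k s / k θ ≤ C * (s / θ) ^ α)
    (θ lam : ℝ) (hθ : 0 < θ) (hlam : 0 ≤ lam) :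
    |k (θ + lam) - k θ| ≤ c * C * k θ * ((θ + lam) ^ α / θ ^ α - 1) / α := by
  set M := c * C * k θ / θ ^ α
  have hantideriv : ∀ t ∈ Icc θ (θ + lam),
      HasDerivAt (fun t => M * (t ^ α / α)) (M * t ^ (α - 1)) t := fun t ht => by
    simpa [mul_div_assoc, hα.ne'] using
      ((Real.hasDerivAt_rpow_const (p := α) (Or.inl (hθ.trans_le ht.1).ne')).div_const α).const_mul M
  have hfence := abs_sub_le_sub_of_abs_deriv_le (by linarith) (fun t ht => hderiv t (hθ.trans_le ht.1))
    hantideriv fun t ht => abs_deriv_le_of_ratio_le hc.le hθ (hkpos θ hθ) hbound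
      (hratio θ · hθ) ht.1
  refine hfence.trans_eq ?_
  have hθα : θ ^ α ≠ 0 := (Real.rpow_pos_of_pos hθ α).ne'
  simp only [M]
  field_simp

theorem stmt4 (c C α : ℝ) (hc : 0 < c) (hC : 0 < C) (hα : 0 < α)
    (k k' : ℝ → ℝ) (hkpos : ∀ t : ℝ, 0 < t → 0 < k t)
    (hderiv : ∀ t : ℝ, 0 < t → HasDerivAt k (k' t) t)
    (hbound : ∀ t : ℝ, 0 < t → |k' t| ≤ c * k t / t)
    (hratio : ∀ θ s : ℝ, 0 < θ → θ ≤ s → k s / k θ ≤ C * (s / θ) ^ α)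
    (θ lam : ℝ) (hθ : 0 < θ) (hlam : 0 ≤ lam) :
    |k (θ + lam) - k θ| ≤ c * C * k θ * ((θ + lam) ^ α / θ ^ α - 1) / α :=
  stmt4_general c C α hc hα k k' hkpos hderiv hbound hratio θ lam hθ hlam
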